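/- arXiv:1202.3858 — 4 statements merged into one kernel-verified Lean document; each statement's English description precedes it below -/
import Mathlib

section
/- Let ζ : ℝ^d → ℝ be integrable with compact support. For a lattice function v : ℤ^d → ℝ^d, define the quasi-interpolant ṽ = ζ * (nodal interpolant of v). Then for any ξ ∈ ℤ^d and ρ ∈ ℤ^d \ {0}, the finite difference satisfies the localization formula: ṽ(ξ+ρ) − ṽ(ξ) = ∫_{ℝ^d} χ_{ξ,ρ}(x) · (∇v(x)·ρ) dx, where χ_{ξ,ρ}(x) := ∫_0^1 ζ(ξ + tρ − x) dt. -/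
/-!
By definition `ṽ(ξ + ρ) - ṽ(ξ) = ∫ ζ(z) (v(ξ + ρ - z) - v(ξ - z)) dz`, and the fundamental
theorem of calculus on the segment writes the bracket as `∫₀¹ ∇_ρ v(ξ + tρ - z) dt`. Since `v`
is Lipschitz, `∇_ρ v` is bounded, so Fubini applies; exchanging the integrals and substituting
`x = ξ + tρ - z` for each fixed `t` gives the formula.
-/

open MeasureTheory

noncomputable def toR {d : ℕ} (ξ : Fin d → ℤ) : Fin d → ℝ := fun i => (ξ i : ℝ)

open scoped Convolution

section Segment

variable {E F : Type*} [NormedAddCommGroup E] [NormedSpace ℝ E]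
  [NormedAddCommGroup F] [NormedSpace ℝ F] {K : NNReal} {v : E → F}

theorem LipschitzWith.norm_fderiv_apply_le (hv : LipschitzWith K v) (x r : E) :
    ‖fderiv ℝ v x r‖ ≤ K * ‖r‖ :=
  ((fderiv ℝ v x).le_opNorm r).trans <|
    mul_le_mul_of_nonneg_right (norm_fderiv_le_of_lipschitz ℝ hv) (norm_nonneg r)

theorem LipschitzWith.sub_eq_intervalIntegral_fderiv [CompleteSpace F]
    (hv : LipschitzWith K v) (hdiff : Differentiable ℝ v) (x r : E) :
    v (x + r) - v x = ∫ t in (0 : ℝ)..1, fderiv ℝ v (x + t • r) r := by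
  set g : ℝ → F := fun t => v (x + t • r)
  have hg : ∀ t, HasDerivAt g (fderiv ℝ v (x + t • r) r) t := fun t =>
    (hdiff _).hasFDerivAt.comp_hasDerivAt t <| by
      simpa using ((hasDerivAt_id t).smul_const r).const_add x
  have hg' : deriv g = fun t => fderiv ℝ v (x + t • r) r := funext fun t => (hg t).deriv
  have hint : IntervalIntegrable (fun t => fderiv ℝ v (x + t • r) r) volume 0 1 := by
    rw [intervalIntegrable_iff_integrableOn_Ioc_of_le zero_le_one, ← hg']
    exact Integrable.of_bound (aestronglyMeasurable_deriv g _) (K * ‖r‖)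
      (ae_of_all _ fun t => hg' ▸ hv.norm_fderiv_apply_le _ r)
  simpa [g] using (intervalIntegral.integral_eq_sub_of_hasDerivAt (fun t _ => hg t) hint).symm

end Segment

section Fubini

variable {G T F : Type*} [AddCommGroup G] [MeasurableSpace G] [MeasurableAdd₂ G]
  [MeasurableNeg G] [MeasurableSpace T] [NormedAddCommGroup F] [NormedSpace ℝ F] [CompleteSpace F]

theorem integral_smul_integral_sub_comm (μ : Measure G) [SFinite μ] [μ.IsAddLeftInvariant]
    [μ.IsNegInvariant] (ν : Measure T) [IsFiniteMeasure ν] {ζ : G → ℝ} (hζ : Integrable ζ μ)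
    {D : G → F} (hD : StronglyMeasurable D) {C : ℝ} (hDC : ∀ x, ‖D x‖ ≤ C)
    {γ : T → G} (hγ : Measurable γ) :
    ∫ z, ζ z • ∫ t, D (γ t - z) ∂ν ∂μ = ∫ x, (∫ t, ζ (γ t - x) ∂ν) • D x ∂μ := by
  set H : T × G → F := fun p => ζ p.2 • D (γ p.1 - p.2)
  -- `Ψ` is a measure-preserving involution of `ν × μ` carrying one integrand to the other.
  set Ψ : T × G → T × G := fun p => (p.1, γ p.1 - p.2)
  have hΨ : MeasurePreserving Ψ (ν.prod μ) (ν.prod μ) :=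
    (MeasurePreserving.id ν).skew_product (g := fun t z => γ t - z) (by fun_prop)
      (ae_of_all _ fun t => (Measure.measurePreserving_sub_left μ (γ t)).map_eq)
  have hΨinv : Function.Involutive Ψ := fun p => by simp [Ψ]
  have hH : Integrable H (ν.prod μ) := by
    refine ((integrable_const C).mul_prod hζ.norm).mono'
      (hζ.aestronglyMeasurable.comp_snd.smul
        (hD.comp_measurable (by fun_prop)).aestronglyMeasurable)
      (ae_of_all _ fun p => ?_)
    rw [norm_smul, mul_comm]
    exact mul_le_mul_of_nonneg_right (hDC _) (norm_nonneg _)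
  calc ∫ z, ζ z • ∫ t, D (γ t - z) ∂ν ∂μ
      = ∫ z, ∫ t, H (t, z) ∂ν ∂μ := by simp only [H, integral_smul]
    _ = ∫ p, H p ∂(ν.prod μ) := (integral_prod_symm H hH).symm
    _ = ∫ p, H (Ψ p) ∂(ν.prod μ) :=
      (hΨ.integral_comp (MeasurableEquiv.ofInvolutive Ψ hΨinv hΨ.measurable).measurableEmbedding
        H).symm
    _ = ∫ x, ∫ t, H (Ψ (t, x)) ∂ν ∂μ :=
      integral_prod_symm _ (hΨ.integrable_comp_of_integrable hH)
    _ = ∫ x, (∫ t, ζ (γ t - x) ∂ν) • D x ∂μ := by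
      simp only [H, Ψ, sub_sub_cancel, integral_smul_const]

end Fubini

section Localization

variable {E F : Type*} [NormedAddCommGroup E] [NormedSpace ℝ E] [MeasurableSpace E]
  [BorelSpace E] [SecondCountableTopology E]
  [NormedAddCommGroup F] [NormedSpace ℝ F] [CompleteSpace F] [SecondCountableTopology F]

open ContinuousLinearMap in
theorem LipschitzWith.convolution_add_sub_convolution_eq_integral_fderiv
    (μ : Measure E) [SFinite μ] [μ.IsAddLeftInvariant] [μ.IsNegInvariant]
    {ζ : E → ℝ} (hζ : Integrable ζ μ) (hζsupp : HasCompactSupport ζ)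
    {K : NNReal} {v : E → F} (hv : LipschitzWith K v) (hdiff : Differentiable ℝ v) (c r : E) :
    (ζ ⋆[lsmul ℝ ℝ, μ] v) (c + r) - (ζ ⋆[lsmul ℝ ℝ, μ] v) c =
      ∫ x, (∫ t in (0 : ℝ)..1, ζ (c + t • r - x)) • fderiv ℝ v x r ∂μ := by
  borelize F
  have hconv := hζsupp.convolutionExists_left_of_continuous_right (lsmul ℝ ℝ)
    hζ.locallyIntegrable hv.continuous
  have hD : StronglyMeasurable fun x => fderiv ℝ v x r :=
    (measurable_fderiv_apply_const ℝ v r).stronglyMeasurable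
  calc (ζ ⋆[lsmul ℝ ℝ, μ] v) (c + r) - (ζ ⋆[lsmul ℝ ℝ, μ] v) c
      = ∫ z, ζ z • (v (c + r - z) - v (c - z)) ∂μ := by
        rw [convolution_def, convolution_def, ← integral_sub (hconv _) (hconv _)]
        simp only [lsmul_apply, smul_sub]
    _ = ∫ z, ζ z • (∫ t in Set.Ioc (0 : ℝ) 1, fderiv ℝ v (c + t • r - z) r) ∂μ := by
        refine integral_congr_ae (ae_of_all _ fun z => ?_)
        dsimp only
        rw [← sub_add_eq_add_sub, hv.sub_eq_intervalIntegral_fderiv hdiff,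
          intervalIntegral.integral_of_le zero_le_one]
        simp only [sub_add_eq_add_sub]
    _ = ∫ x, (∫ t in Set.Ioc (0 : ℝ) 1, ζ (c + t • r - x)) • fderiv ℝ v x r ∂μ :=
        integral_smul_integral_sub_comm μ _ hζ hD (hv.norm_fderiv_apply_le · r) (by fun_prop)
    _ = _ := by simp only [intervalIntegral.integral_of_le zero_le_one]

end Localization

theorem stmt_0_general {d : ℕ}
    (ζ : (Fin d → ℝ) → ℝ) (hζint : Integrable ζ) (hζsupp : HasCompactSupport ζ)
    (v : (Fin d → ℝ) → (Fin d → ℝ))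
    (K : NNReal) (hlip : LipschitzWith K v) (hdiff : Differentiable ℝ v)
    (ξ ρ : Fin d → ℤ) :
    (∫ y, ζ (toR ξ + toR ρ - y) • v y) - (∫ y, ζ (toR ξ - y) • v y)
      = ∫ x, (∫ t in (0:ℝ)..1, ζ (toR ξ + t • toR ρ - x)) • (fderiv ℝ v x (toR ρ)) := by
  simpa only [convolution_lsmul_swap] using
    hlip.convolution_add_sub_convolution_eq_integral_fderiv volume hζint hζsupp hdiff
      (toR ξ) (toR ρ)

/-- **Localization formula.** For an integrable, compactly supported kernel `ζ` and a
Lipschitz, differentiable `v : ℝ^d → ℝ^d`, the finite difference of the quasi-interpolant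
`ṽ = ζ * v` along a lattice direction `ρ` equals the localized integral
`∫ χ_{ξ,ρ}(x) ∇_ρ v(x) dx` with `χ_{ξ,ρ}(x) = ∫_0^1 ζ(ξ + tρ - x) dt`. -/
theorem stmt_0 {d : ℕ}
    (ζ : (Fin d → ℝ) → ℝ) (hζint : Integrable ζ) (hζsupp : HasCompactSupport ζ)
    (v : (Fin d → ℝ) → (Fin d → ℝ))
    (K : NNReal) (hlip : LipschitzWith K v) (hdiff : Differentiable ℝ v)
    (ξ ρ : Fin d → ℤ) (hρ : ρ ≠ 0) :
    (∫ y, ζ (toR ξ + toR ρ - y) • v y) - (∫ y, ζ (toR ξ - y) • v y)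
      = ∫ x, (∫ t in (0:ℝ)..1, ζ (toR ξ + t • toR ρ - x)) • (fderiv ℝ v x (toR ρ)) :=
  stmt_0_general ζ hζint hζsupp v K hlip hdiff ξ ρ
end

section
/- Let ζ : ℝ^d → ℝ be a nonnegative compactly supported function with ζ(ξ) = δ_{0ξ} for ξ ∈ ℤ^d, such that ∑_{ξ∈ℤ^d} ζ(x−ξ) = 1 for all x and such that the associated interpolation reproduces affine functions. For ρ ∈ ℤ^d \ {0} and p ∈ [1,∞), any differentiable u : ℝ^d → ℝ^d with ∇u ∈ L^p and ũ := ζ * u satisfies (∑_{ξ∈ℤ^d} |ũ(ξ+ρ) − ũ(ξ)|^p)^{1/p} ≤ ‖∇_ρ u‖_{L^p} ≤ |ρ| ‖∇u‖_{L^p}. -/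
/-
Writing `ũ(ξ+ρ) − ũ(ξ) = ∫ ζ(ξ − y) (u(y+ρ) − u(y)) dy` and bounding `|u(y+ρ) − u(y)|` by
`∫₀¹ |∇_ρ u(y+tρ)| dt` gives `|ũ(ξ+ρ) − ũ(ξ)| ≤ ∫ χ_ξ |∇_ρ u|`, where
`χ_ξ(x) = ∫₀¹ ζ(ξ + tρ − x) dt`. The partition of unity `∑_ξ ζ(· − ξ) = 1` gives
`∑_ξ χ_ξ = 1`, and, integrated over a unit cube, `∫ ζ = 1`, so every `χ_ξ` is a probability
density. Jensen's inequality for `χ_ξ` then yields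
`∑_ξ |ũ(ξ+ρ) − ũ(ξ)|^p ≤ ∑_ξ ∫ χ_ξ |∇_ρ u|^p = ∫ |∇_ρ u|^p`. The second inequality is the
pointwise bound `|∇_ρ u| ≤ |ρ| |∇u|`.
The estimates are made in `ℝ≥0∞`, where none of the integrals needs an integrability side
condition; only at the end are they transferred to the real-valued statement.
-/

open MeasureTheory Matrix

open Set
open scoped ENNReal

/-- Jensen's inequality for the probability density `w`: `‖f‖₁ ≤ ‖f‖ₚ` for `μ.withDensity w`. -/
theorem rpow_lintegral_mul_le_lintegral_mul_rpow {α : Type*} [MeasurableSpace α]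
    {μ : Measure α} {w f : α → ℝ≥0∞} (hw : Measurable w) (hf : Measurable f)
    (hw1 : ∫⁻ x, w x ∂μ = 1) {p : ℝ} (hp : 1 ≤ p) :
    (∫⁻ x, w x * f x ∂μ) ^ p ≤ ∫⁻ x, w x * f x ^ p ∂μ := by
  have hp0 : 0 < p := zero_lt_one.trans_le hp
  have : IsProbabilityMeasure (μ.withDensity w) := ⟨by simpa using hw1⟩
  have h := eLpNorm_le_eLpNorm_of_exponent_le (μ := μ.withDensity w) (f := f)
    (ENNReal.one_le_ofReal.mpr hp) hf.aestronglyMeasurable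
  rw [eLpNorm_one_eq_lintegral_enorm, eLpNorm_eq_lintegral_rpow_enorm_toReal
    (by positivity) ENNReal.ofReal_ne_top, ENNReal.toReal_ofReal hp0.le] at h
  simp only [enorm_eq_self] at h
  rw [lintegral_withDensity_eq_lintegral_mul _ hw hf,
    lintegral_withDensity_eq_lintegral_mul _ hw (hf.pow_const p)] at h
  have := ENNReal.rpow_le_rpow h hp0.le
  rwa [← ENNReal.rpow_mul, one_div_mul_cancel hp0.ne', ENNReal.rpow_one] at this

/-- No integrability of `f'` is assumed: if the right side is finite, `f'` is integrable and the
fundamental theorem of calculus applies. -/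
theorem enorm_sub_le_setLIntegral_enorm_of_hasDerivAt {E : Type*} [NormedAddCommGroup E]
    [NormedSpace ℝ E] [CompleteSpace E] {f f' : ℝ → E} {a b : ℝ} (hab : a ≤ b)
    (hf : ∀ t ∈ Icc a b, HasDerivAt f (f' t) t) :
    ‖f b - f a‖ₑ ≤ ∫⁻ t in Ioc a b, ‖f' t‖ₑ := by
  rcases eq_top_or_lt_top (∫⁻ t in Ioc a b, ‖f' t‖ₑ) with htop | hfin
  · simp [htop]
  have hderiv : f' =ᵐ[volume.restrict (Ioc a b)] deriv f := by
    filter_upwards [ae_restrict_mem measurableSet_Ioc] with t ht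
    exact (hf t (Ioc_subset_Icc_self ht)).deriv.symm
  have hint : IntegrableOn f' (Ioc a b) :=
    ⟨(aestronglyMeasurable_deriv f _).congr hderiv.symm, hfin⟩
  have hftc : f b - f a = ∫ t in Ioc a b, f' t := by
    rw [← intervalIntegral.integral_of_le hab, intervalIntegral.integral_eq_sub_of_hasDerivAt
      (by rwa [uIcc_of_le hab]) ((intervalIntegrable_iff_integrableOn_Ioc_of_le hab).mpr hint)]
  rw [hftc]
  exact enorm_integral_le_lintegral_enorm _

theorem enorm_sub_le_setLIntegral_enorm_fderiv {E F : Type*} [NormedAddCommGroup E]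
    [NormedSpace ℝ E] [NormedAddCommGroup F] [NormedSpace ℝ F] [CompleteSpace F] {u : E → F}
    (hu : Differentiable ℝ u) (y v : E) :
    ‖u (y + v) - u y‖ₑ ≤ ∫⁻ t in Ioc (0 : ℝ) 1, ‖fderiv ℝ u (y + t • v) v‖ₑ := by
  have hline (t : ℝ) : HasDerivAt (fun s : ℝ => u (y + s • v)) (fderiv ℝ u (y + t • v) v) t := by
    have := ((hasDerivAt_id t).smul_const v).const_add y
    simp only [id, one_smul] at this
    exact (hu _).hasFDerivAt.comp_hasDerivAt t this
  simpa using enorm_sub_le_setLIntegral_enorm_of_hasDerivAt zero_le_one fun t _ => hline t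

section ApplyRpow

variable {α E F : Type*} [MeasurableSpace α] {μ : Measure α} [NormedAddCommGroup E]
  [NormedSpace ℝ E] [NormedAddCommGroup F] [NormedSpace ℝ F] {L : α → E →L[ℝ] F} {p : ℝ}

theorem ContinuousLinearMap.norm_apply_rpow_le (A : E →L[ℝ] F) (v : E) (hp : 0 ≤ p) :
    ‖A v‖ ^ p ≤ ‖v‖ ^ p * ‖A‖ ^ p := by
  rw [← Real.mul_rpow (norm_nonneg _) (norm_nonneg _), mul_comm]
  exact Real.rpow_le_rpow (norm_nonneg _) (A.le_opNorm v) hp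

theorem integrable_norm_apply_rpow (hL : Integrable (fun x => ‖L x‖ ^ p) μ) {v : E}
    (hLv : AEStronglyMeasurable (fun x => L x v) μ) (hp : 0 ≤ p) :
    Integrable (fun x => ‖L x v‖ ^ p) μ :=
  (hL.const_mul (‖v‖ ^ p)).mono' (hLv.norm.aemeasurable.pow_const p).aestronglyMeasurable
    (ae_of_all _ fun x => by
      rw [Real.norm_of_nonneg (by positivity)]
      exact (L x).norm_apply_rpow_le v hp)

theorem integral_norm_apply_rpow_rpow_le (hL : Integrable (fun x => ‖L x‖ ^ p) μ) (hp : 0 < p)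
    (v : E) :
    (∫ x, ‖L x v‖ ^ p ∂μ) ^ (1 / p) ≤ ‖v‖ * (∫ x, ‖L x‖ ^ p ∂μ) ^ (1 / p) := by
  have hmono : ∫ x, ‖L x v‖ ^ p ∂μ ≤ ‖v‖ ^ p * ∫ x, ‖L x‖ ^ p ∂μ := by
    rw [← integral_const_mul]
    exact integral_mono_of_nonneg (ae_of_all _ fun x => by positivity) (hL.const_mul _)
      (ae_of_all _ fun x => (L x).norm_apply_rpow_le v hp.le)
  calc (∫ x, ‖L x v‖ ^ p ∂μ) ^ (1 / p) ≤ (‖v‖ ^ p * ∫ x, ‖L x‖ ^ p ∂μ) ^ (1 / p) :=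
        Real.rpow_le_rpow (integral_nonneg fun x => by positivity) hmono (by positivity)
    _ = ‖v‖ * (∫ x, ‖L x‖ ^ p ∂μ) ^ (1 / p) := by
        rw [Real.mul_rpow (by positivity) (integral_nonneg fun x => by positivity),
          ← Real.rpow_mul (norm_nonneg v), mul_one_div_cancel hp.ne', Real.rpow_one]

end ApplyRpow

theorem tsum_norm_rpow_le_integral_norm_rpow {ι α E F : Type*} [MeasurableSpace α]
    {μ : Measure α} [NormedAddCommGroup E] [NormedAddCommGroup F] {a : ι → E} {f : α → F}
    {p : ℝ} (hp : 0 ≤ p) (hf : Integrable (fun x => ‖f x‖ ^ p) μ)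
    (h : ∑' i, ‖a i‖ₑ ^ p ≤ ∫⁻ x, ‖f x‖ₑ ^ p ∂μ) :
    ∑' i, ‖a i‖ ^ p ≤ ∫ x, ‖f x‖ ^ p ∂μ := by
  have hlhs : ∑' i, ‖a i‖ ^ p = (∑' i, ‖a i‖ₑ ^ p).toReal := by
    rw [ENNReal.tsum_toReal_eq fun i => ENNReal.rpow_ne_top_of_nonneg hp enorm_ne_top]
    simp_rw [← ENNReal.toReal_rpow, toReal_enorm]
  have hrhs : ∫⁻ x, ‖f x‖ₑ ^ p ∂μ = ENNReal.ofReal (∫ x, ‖f x‖ ^ p ∂μ) := by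
    rw [ofReal_integral_eq_lintegral_ofReal hf (ae_of_all _ fun x => by positivity)]
    simp_rw [← ofReal_norm, ENNReal.ofReal_rpow_of_nonneg (norm_nonneg _) hp]
  rw [hlhs]
  exact ENNReal.toReal_le_of_le_ofReal (integral_nonneg fun x => by positivity) (hrhs ▸ h)

section SegmentKernel

variable {E : Type*} [NormedAddCommGroup E] [NormedSpace ℝ E] [MeasurableSpace E] [BorelSpace E]

/-- The paper's `χ_{ξ,ρ}(x) = ∫₀¹ ζ(ξ + tρ − x) dt` is `segmentKernel ζ ξ ρ x`. -/
noncomputable def segmentKernel (w : E → ℝ≥0∞) (c v x : E) : ℝ≥0∞ :=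
  ∫⁻ t in Ioc (0 : ℝ) 1, w (c + t • v - x)

variable {w : E → ℝ≥0∞}

theorem tsum_segmentKernel {ι : Type*} [Countable ι] {c : ι → E} (hw : Measurable w)
    (hpart : ∀ y, ∑' i, w (y + c i) = 1) (v x : E) :
    ∑' i, segmentKernel w (c i) v x = 1 := by
  simp only [segmentKernel]
  rw [← lintegral_tsum fun i => by fun_prop]
  have hslice (t : ℝ) : ∑' i, w (c i + t • v - x) = 1 := by
    convert hpart (t • v - x) using 3 with i
    congr 1
    abel
  simp [hslice]

variable [FiniteDimensional ℝ E]

theorem measurable_segmentKernel (hw : Measurable w) (c v : E) :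
    Measurable (segmentKernel w c v) :=
  Measurable.lintegral_prod_right (f := fun x t => w (c + t • v - x)) (by fun_prop)

variable (μ : Measure E) [μ.IsAddHaarMeasure]

theorem lintegral_segmentKernel (hw : Measurable w) (c v : E) :
    ∫⁻ x, segmentKernel w c v x ∂μ = ∫⁻ x, w x ∂μ := by
  simp only [segmentKernel]
  rw [lintegral_lintegral_swap (by fun_prop)]
  simp [lintegral_sub_left_eq_self]

theorem lintegral_mul_setLIntegral_comp_add_smul (hw : Measurable w) {g : E → ℝ≥0∞}
    (hg : Measurable g) (c v : E) :
    ∫⁻ y, w (c - y) * (∫⁻ t in Ioc (0 : ℝ) 1, g (y + t • v)) ∂μ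
      = ∫⁻ x, segmentKernel w c v x * g x ∂μ := by
  calc ∫⁻ y, w (c - y) * (∫⁻ t in Ioc (0 : ℝ) 1, g (y + t • v)) ∂μ
      = ∫⁻ y, (∫⁻ t in Ioc (0 : ℝ) 1, w (c - y) * g (y + t • v)) ∂μ :=
        lintegral_congr fun y => (lintegral_const_mul _ (by fun_prop)).symm
    _ = ∫⁻ t in Ioc (0 : ℝ) 1, ∫⁻ y, w (c - y) * g (y + t • v) ∂μ :=
        lintegral_lintegral_swap (by fun_prop)
    _ = ∫⁻ t in Ioc (0 : ℝ) 1, ∫⁻ x, w (c + t • v - x) * g x ∂μ := by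
        refine setLIntegral_congr_fun measurableSet_Ioc fun t _ => ?_
        rw [← lintegral_add_right_eq_self (fun x => w (c + t • v - x) * g x) (t • v)]
        simp only [add_sub_add_right_eq_sub]
    _ = ∫⁻ x, (∫⁻ t in Ioc (0 : ℝ) 1, w (c + t • v - x) * g x) ∂μ :=
        (lintegral_lintegral_swap (by fun_prop)).symm
    _ = ∫⁻ x, segmentKernel w c v x * g x ∂μ :=
        lintegral_congr fun x => lintegral_mul_const _ (by fun_prop)

variable {F : Type*} [NormedAddCommGroup F] [NormedSpace ℝ F] [CompleteSpace F]

theorem enorm_integral_smul_sub_le_lintegral_segmentKernel_mul {ζ : E → ℝ}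
    (hζ0 : ∀ x, 0 ≤ ζ x) (hζc : HasCompactSupport ζ) (hζcont : Continuous ζ) {u : E → F}
    (hu : Differentiable ℝ u) (c v : E) :
    ‖(∫ y, ζ (c + v - y) • u y ∂μ) - ∫ y, ζ (c - y) • u y ∂μ‖ₑ
      ≤ ∫⁻ x, segmentKernel (fun z => ENNReal.ofReal (ζ z)) c v x * ‖fderiv ℝ u x v‖ₑ ∂μ := by
  borelize F
  have hint (a : E) : Integrable (fun y => ζ (c - y) • u (y + a)) μ :=
    ((hζcont.comp (continuous_const.sub continuous_id)).smul
      (hu.continuous.comp (continuous_id.add continuous_const))).integrable_of_hasCompactSupport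
      (hζc.comp_homeomorph (Homeomorph.subLeft c)).smul_right
  have hshift : ∫ y, ζ (c + v - y) • u y ∂μ = ∫ y, ζ (c - y) • u (y + v) ∂μ := by
    rw [← integral_add_right_eq_self (fun y => ζ (c + v - y) • u y) v]
    simp only [add_sub_add_right_eq_sub]
  have hdiff : (∫ y, ζ (c + v - y) • u y ∂μ) - ∫ y, ζ (c - y) • u y ∂μ
      = ∫ y, ζ (c - y) • (u (y + v) - u y) ∂μ := by
    rw [hshift, ← integral_sub (hint v) (by simpa using hint 0)]
    simp_rw [smul_sub]
  calc _ = ‖∫ y, ζ (c - y) • (u (y + v) - u y) ∂μ‖ₑ := by rw [hdiff]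
    _ ≤ ∫⁻ y, ENNReal.ofReal (ζ (c - y)) * ‖u (y + v) - u y‖ₑ ∂μ := by
        refine (enorm_integral_le_lintegral_enorm _).trans_eq (lintegral_congr fun y => ?_)
        rw [enorm_smul, Real.enorm_of_nonneg (hζ0 _)]
    _ ≤ ∫⁻ y, ENNReal.ofReal (ζ (c - y))
          * (∫⁻ t in Ioc (0 : ℝ) 1, ‖fderiv ℝ u (y + t • v) v‖ₑ) ∂μ :=
        lintegral_mono fun y => by gcongr; exact enorm_sub_le_setLIntegral_enorm_fderiv hu y v
    _ = _ := lintegral_mul_setLIntegral_comp_add_smul μ hζcont.measurable.ennreal_ofReal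
        (measurable_fderiv_apply_const ℝ u v).enorm c v

theorem tsum_enorm_integral_smul_sub_rpow_le {ι : Type*} [Countable ι] {c : ι → E}
    {ζ : E → ℝ} (hζ0 : ∀ x, 0 ≤ ζ x) (hζc : HasCompactSupport ζ) (hζcont : Continuous ζ)
    (hmass : ∫⁻ x, ENNReal.ofReal (ζ x) ∂μ = 1)
    (hpart : ∀ y, ∑' i, ENNReal.ofReal (ζ (y + c i)) = 1) {p : ℝ} (hp : 1 ≤ p) {u : E → F}
    (hu : Differentiable ℝ u) (v : E) :
    ∑' i, ‖(∫ y, ζ (c i + v - y) • u y ∂μ) - ∫ y, ζ (c i - y) • u y ∂μ‖ₑ ^ p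
      ≤ ∫⁻ x, ‖fderiv ℝ u x v‖ₑ ^ p ∂μ := by
  borelize F
  set w : E → ℝ≥0∞ := fun z => ENNReal.ofReal (ζ z)
  have hw : Measurable w := hζcont.measurable.ennreal_ofReal
  have hg : Measurable fun x => ‖fderiv ℝ u x v‖ₑ := (measurable_fderiv_apply_const ℝ u v).enorm
  calc _ ≤ ∑' i, (∫⁻ x, segmentKernel w (c i) v x * ‖fderiv ℝ u x v‖ₑ ∂μ) ^ p :=
        ENNReal.tsum_le_tsum fun i => ENNReal.rpow_le_rpow
          (enorm_integral_smul_sub_le_lintegral_segmentKernel_mul μ hζ0 hζc hζcont hu (c i) v)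
          (by linarith)
    _ ≤ ∑' i, ∫⁻ x, segmentKernel w (c i) v x * ‖fderiv ℝ u x v‖ₑ ^ p ∂μ :=
        ENNReal.tsum_le_tsum fun i => rpow_lintegral_mul_le_lintegral_mul_rpow
          (measurable_segmentKernel hw _ _) hg ((lintegral_segmentKernel μ hw _ _).trans hmass) hp
    _ = ∫⁻ x, ‖fderiv ℝ u x v‖ₑ ^ p ∂μ := by
        rw [← lintegral_tsum fun i => by
          have := measurable_segmentKernel hw (c i) v
          fun_prop]
        simp_rw [ENNReal.tsum_mul_right, tsum_segmentKernel hw hpart, one_mul]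

end SegmentKernel

theorem lintegral_eq_one_of_periodization_eq_one {d : ℕ} {f : (Fin d → ℝ) → ℝ≥0∞}
    (hf : Measurable f) (h : ∀ x, ∑' ξ : Fin d → ℤ, f (x + toR ξ) = 1) :
    ∫⁻ x, f x = 1 := by
  set b := Pi.basisFun ℝ (Fin d)
  have hdom := ZSpan.isAddFundamentalDomain' b volume
  let e : (Fin d → ℤ) ≃ (Submodule.span ℤ (range b)).toAddSubgroup :=
    (b.restrictScalars ℤ).equivFun.symm.toEquiv
  have he (ξ : Fin d → ℤ) : (e ξ : Fin d → ℝ) = toR ξ := by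
    ext i
    simp [e, toR, b, Pi.single_apply]
  have : Countable (Submodule.span ℤ (range b)).toAddSubgroup := e.symm.injective.countable
  rw [hdom.lintegral_eq_tsum'', ← lintegral_tsum (f := fun g x => f (g +ᵥ x))
    fun g => (hf.comp (measurable_const_vadd g)).aemeasurable]
  calc ∫⁻ x in ZSpan.fundamentalDomain b, ∑' g : (Submodule.span ℤ (range b)).toAddSubgroup,
        f (g +ᵥ x)
      = ∫⁻ x in ZSpan.fundamentalDomain b, 1 := by
        refine lintegral_congr fun x => ?_
        rw [← h x, ← e.tsum_eq]
        refine tsum_congr fun ξ => ?_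
        rw [AddSubgroup.vadd_def, vadd_eq_add, he, add_comm]
    _ = 1 := by
        rw [setLIntegral_one, ZSpan.fundamentalDomain_pi_basisFun, volume_pi_pi]
        simp

theorem tsum_ofReal_add_toR_eq_one {d : ℕ} {ζ : (Fin d → ℝ) → ℝ} (hζ0 : ∀ x, 0 ≤ ζ x)
    (hpart : ∀ x, ∑' ξ : Fin d → ℤ, ζ (x - toR ξ) = 1) (x : Fin d → ℝ) :
    ∑' ξ : Fin d → ℤ, ENNReal.ofReal (ζ (x + toR ξ)) = 1 := by
  have hsumm : Summable fun ξ : Fin d → ℤ => ζ (x - toR ξ) :=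
    not_not.mp fun h => by simpa [tsum_eq_zero_of_not_summable h] using hpart x
  rw [← (Equiv.neg (Fin d → ℤ)).tsum_eq, ← ENNReal.ofReal_one, ← hpart x,
    ENNReal.ofReal_tsum_of_nonneg (fun _ => hζ0 _) hsumm]
  refine tsum_congr fun ξ => ?_
  rw [sub_eq_add_neg]
  congr 3
  ext i
  simp [toR]

theorem stmt_3_general {d : ℕ} (ζ : (Fin d → ℝ) → ℝ)
    (hζ0 : ∀ x, 0 ≤ ζ x) (hζc : HasCompactSupport ζ) (hζcont : Continuous ζ)
    (haffine : ∀ (a : ℝ) (b x : Fin d → ℝ),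
      ∑' ξ : Fin d → ℤ, (a + b ⬝ᵥ toR ξ) * ζ (x - toR ξ) = a + b ⬝ᵥ x)
    (p : ℝ) (hp : 1 ≤ p)
    (u : (Fin d → ℝ) → (Fin d → ℝ)) (hdiff : Differentiable ℝ u)
    (hLp : Integrable (fun x => ‖fderiv ℝ u x‖ ^ p))
    (ρ : Fin d → ℤ) :
    (∑' ξ : Fin d → ℤ,
        ‖(∫ y, ζ (toR ξ + toR ρ - y) • u y) - (∫ y, ζ (toR ξ - y) • u y)‖ ^ p) ^ (1/p)
      ≤ (∫ x, ‖fderiv ℝ u x (toR ρ)‖ ^ p) ^ (1/p)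
    ∧ (∫ x, ‖fderiv ℝ u x (toR ρ)‖ ^ p) ^ (1/p)
      ≤ ‖toR ρ‖ * (∫ x, ‖fderiv ℝ u x‖ ^ p) ^ (1/p) := by
  have hp0 : 0 < p := zero_lt_one.trans_le hp
  have hpart (x : Fin d → ℝ) : ∑' ξ : Fin d → ℤ, ζ (x - toR ξ) = 1 := by
    simpa using haffine 1 0 x
  have hperiod := tsum_ofReal_add_toR_eq_one hζ0 hpart
  have hmass := lintegral_eq_one_of_periodization_eq_one hζcont.measurable.ennreal_ofReal hperiod
  have hint := integrable_norm_apply_rpow hLp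
    (measurable_fderiv_apply_const ℝ u (toR ρ)).aestronglyMeasurable hp0.le
  refine ⟨Real.rpow_le_rpow (tsum_nonneg fun _ => by positivity)
    (tsum_norm_rpow_le_integral_norm_rpow hp0.le hint ?_) (by positivity),
    integral_norm_apply_rpow_rpow_le hLp hp0 _⟩
  exact tsum_enorm_integral_smul_sub_rpow_le volume hζ0 hζc hζcont hmass hperiod hp hdiff _

/-- **ℓ^p bound for finite differences of the quasi-interpolant.** With a nonnegative,
compactly supported nodal basis function `ζ` whose interpolation reproduces affine
functions, the quasi-interpolant `ũ = ζ * u` of a differentiable `u` with `∇u ∈ L^p`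
satisfies `‖D_ρ ũ‖_{ℓ^p} ≤ ‖∇_ρ u‖_{L^p} ≤ |ρ| ‖∇u‖_{L^p}`. -/
theorem stmt_3 {d : ℕ} (ζ : (Fin d → ℝ) → ℝ)
    (hζ0 : ∀ x, 0 ≤ ζ x) (hζc : HasCompactSupport ζ) (hζcont : Continuous ζ)
    (hnodal : ∀ ξ : Fin d → ℤ, ζ (toR ξ) = if ξ = 0 then 1 else 0)
    (haffine : ∀ (a : ℝ) (b x : Fin d → ℝ),
      ∑' ξ : Fin d → ℤ, (a + b ⬝ᵥ toR ξ) * ζ (x - toR ξ) = a + b ⬝ᵥ x)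
    (p : ℝ) (hp : 1 ≤ p)
    (u : (Fin d → ℝ) → (Fin d → ℝ)) (hdiff : Differentiable ℝ u)
    (hLp : Integrable (fun x => ‖fderiv ℝ u x‖ ^ p))
    (ρ : Fin d → ℤ) (hρ : ρ ≠ 0) :
    (∑' ξ : Fin d → ℤ,
        ‖(∫ y, ζ (toR ξ + toR ρ - y) • u y) - (∫ y, ζ (toR ξ - y) • u y)‖ ^ p) ^ (1/p)
      ≤ (∫ x, ‖fderiv ℝ u x (toR ρ)‖ ^ p) ^ (1/p)
    ∧ (∫ x, ‖fderiv ℝ u x (toR ρ)‖ ^ p) ^ (1/p)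
      ≤ ‖toR ρ‖ * (∫ x, ‖fderiv ℝ u x‖ ^ p) ^ (1/p) :=
  stmt_3_general ζ hζ0 hζc hζcont haffine p hp u hdiff hLp ρ
end

section
/- Let V : 𝒟_κ → ℝ be C^k with partial derivatives satisfying the summable decay bound ∑_{ρ∈Λ_*^j} m(ρ) = M^{(j)} < ∞ where m(ρ) := (∏|ρ_i|) sup_{g∈𝒟_κ} ‖V_ρ(g)‖. Let g_ξ ∈ 𝒟_κ for each ξ ∈ Λ, and let v_1,…,v_j be lattice displacements with interpolants satisfying ∇v_i ∈ L^{p_i}, ∑ 1/p_i = 1. Then ∑_{ξ∈Λ} ∑_{ρ∈Λ_*^j} |V_ρ(g_ξ)[D_ρ v(ξ)]| ≤ C M^{(j)} ∏_{i=1}^j ‖∇v_i‖_{L^{p_i}}, with C independent of V and the v_i. -/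
/-!
The finite difference `ṽ(ξ + ρ) - ṽ(ξ)` of the quasi-interpolant `ṽ = ∫ ζ(· - y) v(y) dy` is the
`ζ(ξ - ·)`-average of `v(· + ρ) - v`, hence at most `|ρ|` times the `ζ(ξ - ·)`-average of the mean
of `|∇v|` over the segments `[y, y + ρ]`. Since the lattice translates of `ζ` form a partition of
unity, Schur's test bounds this lattice sequence in `ℓ^p` by `max(1, ∫ζ)` times the `L^p` norm of
the segment means, and Jensen's inequality plus translation invariance bound the latter by
`‖∇v‖_{L^p}`; so `‖D_ρ ṽ‖_{ℓ^p} ≤ C |ρ| ‖∇v‖_{L^p}` for every `p ∈ [1, ∞]`. For fixed `ρ`,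
`|V_ρ(g_ξ)[D_ρ v(ξ)]| ≤ (m(ρ) / ∏|ρᵢ|) ∏ᵢ |D_{ρᵢ} vᵢ(ξ)|` and the generalized Hölder inequality on
`ℤ^d` bound the sum over `ξ` by `C^j m(ρ) ∏ᵢ ‖∇vᵢ‖_{L^{pᵢ}}`; summing over `ρ` gives the claim.
-/

open MeasureTheory ENNReal

section Holder

variable {ι α 𝕜 : Type*} [MeasurableSpace α] {μ : Measure α} [NormedCommRing 𝕜] [NormOneClass 𝕜]

theorem MeasureTheory.eLpNorm_prod_le {s : Finset ι} {f : ι → α → 𝕜} {p : ι → ℝ≥0∞}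
    (hf : ∀ i ∈ s, AEStronglyMeasurable (f i) μ) :
    eLpNorm (∏ i ∈ s, f i) (∑ i ∈ s, (p i)⁻¹)⁻¹ μ ≤ ∏ i ∈ s, eLpNorm (f i) (p i) μ := by
  induction s using Finset.cons_induction with
  | empty =>
    simpa [eLpNorm_exponent_top] using
      eLpNormEssSup_le_of_ae_enorm_bound (μ := μ) (f := (1 : α → 𝕜)) (.of_forall fun _ => by simp)
  | cons i s hi ih =>
    rw [Finset.prod_cons, Finset.prod_cons]
    have hs := Finset.forall_of_forall_cons hf
    calc eLpNorm (f i * ∏ j ∈ s, f j) (∑ j ∈ Finset.cons i s hi, (p j)⁻¹)⁻¹ μ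
        ≤ 1 * eLpNorm (f i) (p i) μ * eLpNorm (∏ j ∈ s, f j) (∑ j ∈ s, (p j)⁻¹)⁻¹ μ :=
          eLpNorm_le_eLpNorm_mul_eLpNorm_of_nnnorm (hf i (Finset.mem_cons_self ..))
            (Finset.aestronglyMeasurable_prod s hs) (· * ·) 1
            (.of_forall fun _ => by simpa using nnnorm_mul_le _ _) (hpqr := ⟨by simp⟩)
      _ ≤ _ := by rw [one_mul]; gcongr; exact ih hs

end Holder

theorem ENNReal.lintegral_mul_rpow_le {α : Type*} [MeasurableSpace α] {μ : Measure α}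
    {w g : α → ℝ≥0∞} (hw : AEMeasurable w μ) (hg : AEMeasurable g μ) {r : ℝ} (hr : 1 ≤ r) :
    (∫⁻ x, w x * g x ∂μ) ^ r ≤ (∫⁻ x, w x ∂μ) ^ (r - 1) * ∫⁻ x, w x * g x ^ r ∂μ := by
  have hr0 : 0 < r := by linarith
  have hr1 : 0 ≤ 1 - r⁻¹ := sub_nonneg.2 (inv_le_one_of_one_le₀ hr)
  have hsplit : ∀ x, w x * g x = w x ^ (1 - r⁻¹) * (w x * g x ^ r) ^ r⁻¹ := fun x => by
    rw [ENNReal.mul_rpow_of_nonneg _ _ (by positivity), ← ENNReal.rpow_mul,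
      mul_inv_cancel₀ hr0.ne', ENNReal.rpow_one, ← mul_assoc,
      ← ENNReal.rpow_add_of_nonneg _ _ hr1 (by positivity), sub_add_cancel, ENNReal.rpow_one]
  have hHolder : ∫⁻ x, w x * g x ∂μ
      ≤ (∫⁻ x, w x ∂μ) ^ (1 - r⁻¹) * (∫⁻ x, w x * g x ^ r ∂μ) ^ r⁻¹ := by
    simpa only [← hsplit] using ENNReal.lintegral_mul_norm_pow_le (g := fun x => w x * g x ^ r) hw
      (hw.mul (hg.pow_const r))
      hr1 (by positivity) (sub_add_cancel 1 r⁻¹)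
  calc (∫⁻ x, w x * g x ∂μ) ^ r
      ≤ ((∫⁻ x, w x ∂μ) ^ (1 - r⁻¹) * (∫⁻ x, w x * g x ^ r ∂μ) ^ r⁻¹) ^ r :=
        ENNReal.rpow_le_rpow hHolder hr0.le
    _ = _ := by
      rw [ENNReal.mul_rpow_of_nonneg _ _ hr0.le, ← ENNReal.rpow_mul, ← ENNReal.rpow_mul,
        inv_mul_cancel₀ hr0.ne', ENNReal.rpow_one, sub_mul, one_mul, inv_mul_cancel₀ hr0.ne']

theorem ContinuousMultilinearMap.tsum_enorm_le_mul_prod_eLpNorm {ι κ 𝕜 G : Type*} [Fintype ι]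
    [Countable κ] [MeasurableSpace κ] [MeasurableSingletonClass κ] [NontriviallyNormedField 𝕜]
    {E : ι → Type*} [∀ i, NormedAddCommGroup (E i)] [∀ i, NormedSpace 𝕜 (E i)]
    [NormedAddCommGroup G] [NormedSpace 𝕜 G]
    (T : κ → ContinuousMultilinearMap 𝕜 E G) {B : ℝ≥0∞} (hT : ∀ ξ, ‖T ξ‖ₑ ≤ B)
    (x : ∀ i, κ → E i) {p : ι → ℝ≥0∞} (hp : ∑ i, (p i)⁻¹ = 1) :
    ∑' ξ, ‖T ξ (fun i => x i ξ)‖ₑ ≤ B * ∏ i, eLpNorm (x i) (p i) Measure.count := by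
  have hHolder := eLpNorm_prod_le (μ := Measure.count) (s := Finset.univ) (p := p)
    (f := fun i ξ => ‖x i ξ‖) fun i _ => (measurable_of_countable _).aestronglyMeasurable
  rw [hp, inv_one, eLpNorm_one_eq_lintegral_enorm, lintegral_count] at hHolder
  simp only [Finset.prod_apply, eLpNorm_norm] at hHolder
  calc ∑' ξ, ‖T ξ (fun i => x i ξ)‖ₑ ≤ ∑' ξ, B * ‖∏ i, ‖x i ξ‖‖ₑ := by
        refine ENNReal.tsum_le_tsum fun ξ => ?_
        have hprod : ‖∏ i, ‖x i ξ‖‖ₑ = ∏ i, ‖x i ξ‖ₑ := by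
          rw [Real.enorm_of_nonneg (by positivity),
            ENNReal.ofReal_prod_of_nonneg fun _ _ => norm_nonneg _]
          simp only [ofReal_norm]
        rw [hprod]
        calc ‖T ξ (fun i => x i ξ)‖ₑ ≤ ‖T ξ‖ₑ * ∏ i, ‖x i ξ‖ₑ := by
              have h := ENNReal.coe_le_coe.2 ((T ξ).le_opNNNorm fun i => x i ξ)
              push_cast at h
              simpa only [enorm_eq_nnnorm] using h
          _ ≤ _ := by gcongr; exact hT ξ
    _ = B * ∑' ξ, ‖∏ i, ‖x i ξ‖‖ₑ := ENNReal.tsum_mul_left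
    _ ≤ _ := by gcongr

theorem ContinuousMultilinearMap.tsum_enorm_le_of_eLpNorm_le {ι κ 𝕜 G : Type*} [Fintype ι]
    [Countable κ] [MeasurableSpace κ] [MeasurableSingletonClass κ] [NontriviallyNormedField 𝕜]
    {E : ι → Type*} [∀ i, NormedAddCommGroup (E i)] [∀ i, NormedSpace 𝕜 (E i)]
    [NormedAddCommGroup G] [NormedSpace 𝕜 G]
    (T : κ → ContinuousMultilinearMap 𝕜 E G) {s b : ι → ℝ≥0∞} {M : ℝ≥0∞}
    (hs0 : ∀ i, s i ≠ 0) (hs_top : ∀ i, s i ≠ ∞) (hT : ∀ ξ, ‖T ξ‖ₑ * ∏ i, s i ≤ M)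
    (x : ∀ i, κ → E i) {p : ι → ℝ≥0∞} (hp : ∑ i, (p i)⁻¹ = 1)
    (hx : ∀ i, eLpNorm (x i) (p i) Measure.count ≤ s i * b i) :
    ∑' ξ, ‖T ξ (fun i => x i ξ)‖ₑ ≤ M * ∏ i, b i := by
  have hS0 : ∏ i, s i ≠ 0 := Finset.prod_ne_zero_iff.2 fun i _ => hs0 i
  have hS_top : ∏ i, s i ≠ ∞ := ENNReal.prod_ne_top fun i _ => hs_top i
  calc ∑' ξ, ‖T ξ (fun i => x i ξ)‖ₑ ≤ (M / ∏ i, s i) * ∏ i, eLpNorm (x i) (p i) Measure.count :=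
        tsum_enorm_le_mul_prod_eLpNorm T
          (fun ξ => (ENNReal.le_div_iff_mul_le (.inl hS0) (.inl hS_top)).2 (hT ξ)) x hp
    _ ≤ (M / ∏ i, s i) * ∏ i, (s i * b i) := by gcongr with i; exact hx i
    _ = M * ∏ i, b i := by
        rw [Finset.prod_mul_distrib, ← mul_assoc, ENNReal.div_mul_cancel hS0 hS_top]

theorem eLpNorm_count_lintegral_mul_le {α κ : Type*} [MeasurableSpace α] {μ : Measure α}
    [Countable κ] [MeasurableSpace κ] [MeasurableSingletonClass κ]
    {w : κ → α → ℝ≥0∞} {G : α → ℝ≥0∞} {c : ℝ≥0∞} (hw : ∀ ξ, AEMeasurable (w ξ) μ)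
    (hG : AEMeasurable G μ) (hwc : ∀ ξ, ∫⁻ y, w ξ y ∂μ ≤ c) (hw1 : ∀ y, ∑' ξ, w ξ y ≤ 1)
    {p : ℝ≥0∞} (hp : 1 ≤ p) :
    eLpNorm (fun ξ => ∫⁻ y, w ξ y * G y ∂μ) p Measure.count ≤ max 1 c * eLpNorm G p μ := by
  have hwc' : ∀ ξ, ∫⁻ y, w ξ y ∂μ ≤ max 1 c := fun ξ => (hwc ξ).trans (le_max_right _ _)
  rcases eq_or_ne p ∞ with rfl | hp_top
  · simp only [eLpNorm_exponent_top, eLpNormEssSup, enorm_eq_self]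
    refine essSup_le_of_ae_le _ (.of_forall fun ξ => ?_)
    calc ∫⁻ y, w ξ y * G y ∂μ ≤ ∫⁻ y, w ξ y * essSup G μ ∂μ :=
          lintegral_mono_ae <| (ae_le_essSup G).mono fun y hy => by gcongr
      _ ≤ max 1 c * essSup G μ := by
          rw [lintegral_mul_const'' _ (hw ξ)]; gcongr; exact hwc' ξ
  have hp0 : p ≠ 0 := (zero_lt_one.trans_le hp).ne'
  set r := p.toReal
  have hr : 1 ≤ r := by simpa using ENNReal.toReal_mono hp_top hp
  have hr0 : 0 < r := by linarith
  simp only [eLpNorm_eq_lintegral_rpow_enorm_toReal hp0 hp_top, enorm_eq_self, lintegral_count]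
  have hsum : ∑' ξ, (∫⁻ y, w ξ y * G y ∂μ) ^ r ≤ max 1 c ^ (r - 1) * ∫⁻ y, G y ^ r ∂μ :=
    calc ∑' ξ, (∫⁻ y, w ξ y * G y ∂μ) ^ r
        ≤ ∑' ξ, max 1 c ^ (r - 1) * ∫⁻ y, w ξ y * G y ^ r ∂μ := by
          refine ENNReal.tsum_le_tsum fun ξ => (ENNReal.lintegral_mul_rpow_le (hw ξ) hG hr).trans ?_
          gcongr
          exact hwc' ξ
      _ = max 1 c ^ (r - 1) * ∫⁻ y, (∑' ξ, w ξ y) * G y ^ r ∂μ := by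
          rw [ENNReal.tsum_mul_left, ← lintegral_tsum (f := fun ξ y => w ξ y * G y ^ r)
            fun ξ => (hw ξ).mul (hG.pow_const r)]
          simp_rw [ENNReal.tsum_mul_right]
      _ ≤ max 1 c ^ (r - 1) * ∫⁻ y, G y ^ r ∂μ := by
          gcongr with y
          calc (∑' ξ, w ξ y) * G y ^ r ≤ 1 * G y ^ r := by gcongr; exact hw1 y
            _ = G y ^ r := one_mul _
  calc (∑' ξ, (∫⁻ y, w ξ y * G y ∂μ) ^ r) ^ (1 / r)
      ≤ (max 1 c ^ (r - 1) * ∫⁻ y, G y ^ r ∂μ) ^ (1 / r) := by gcongr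
    _ = max 1 c ^ ((r - 1) / r) * (∫⁻ y, G y ^ r ∂μ) ^ (1 / r) := by
        rw [ENNReal.mul_rpow_of_nonneg _ _ (by positivity), ← ENNReal.rpow_mul]
        ring_nf
    _ ≤ max 1 c * (∫⁻ y, G y ^ r ∂μ) ^ (1 / r) := by
        gcongr
        calc max 1 c ^ ((r - 1) / r) ≤ max 1 c ^ (1 : ℝ) :=
              ENNReal.rpow_le_rpow_of_exponent_le (le_max_left _ _)
                ((div_le_one hr0).2 (by linarith))
          _ = max 1 c := ENNReal.rpow_one _

theorem enorm_sub_le_lintegral_deriv_of_differentiable {F : Type*} [NormedAddCommGroup F]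
    [NormedSpace ℝ F] [CompleteSpace F] {γ : ℝ → F} (hγ : Differentiable ℝ γ) :
    ‖γ 1 - γ 0‖ₑ ≤ ∫⁻ t in Set.Icc (0 : ℝ) 1, ‖deriv γ t‖ₑ := by
  by_cases hint : IntegrableOn (deriv γ) (Set.Icc 0 1)
  · rw [← intervalIntegral.integral_deriv_eq_sub (fun t _ => hγ t)
      (intervalIntegrable_iff_integrableOn_Icc_of_le zero_le_one |>.2 hint),
      intervalIntegral.integral_of_le zero_le_one]
    exact (enorm_integral_le_lintegral_enorm _).trans
      (lintegral_mono_set Set.Ioc_subset_Icc_self)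
  · have hinfinite : ¬HasFiniteIntegral (deriv γ) (volume.restrict (Set.Icc 0 1)) :=
      fun h => hint ⟨aestronglyMeasurable_deriv γ _, h⟩
    rw [hasFiniteIntegral_iff_enorm, not_lt, top_le_iff] at hinfinite
    rw [hinfinite]
    exact le_top

section SegmentMean

variable {E : Type*} [NormedAddCommGroup E] [NormedSpace ℝ E]

noncomputable def segmentMean (H : E → ℝ≥0∞) (a y : E) : ℝ≥0∞ :=
  ∫⁻ t in Set.Icc (0 : ℝ) 1, H (y + t • a)

theorem enorm_sub_le_mul_segmentMean {F : Type*} [NormedAddCommGroup F] [NormedSpace ℝ F]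
    [CompleteSpace F] {u : E → F} (hu : Differentiable ℝ u) (y a : E) :
    ‖u (y + a) - u y‖ₑ ≤ ‖a‖ₑ * segmentMean (fun z => ‖fderiv ℝ u z‖ₑ) a y := by
  have hderiv : ∀ t : ℝ, HasDerivAt (fun s : ℝ => u (y + s • a)) (fderiv ℝ u (y + t • a) a) t :=
    fun t => (hu _).hasFDerivAt.comp_hasDerivAt t
      (by simpa using ((hasDerivAt_id t).smul_const a).const_add y)
  calc ‖u (y + a) - u y‖ₑ
      ≤ ∫⁻ t in Set.Icc (0 : ℝ) 1, ‖deriv (fun s : ℝ => u (y + s • a)) t‖ₑ := by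
        simpa using
          enorm_sub_le_lintegral_deriv_of_differentiable fun t => (hderiv t).differentiableAt
    _ ≤ ∫⁻ t in Set.Icc (0 : ℝ) 1, ‖a‖ₑ * ‖fderiv ℝ u (y + t • a)‖ₑ := by
        refine lintegral_mono fun t => ?_
        rw [(hderiv t).deriv, mul_comm]
        exact (fderiv ℝ u (y + t • a)).le_opENorm a
    _ = ‖a‖ₑ * segmentMean (fun z => ‖fderiv ℝ u z‖ₑ) a y :=
        lintegral_const_mul' _ _ enorm_ne_top

variable [MeasurableSpace E] [BorelSpace E] [SecondCountableTopology E]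

theorem measurable_segmentMean {H : E → ℝ≥0∞} (hH : Measurable H) (a : E) :
    Measurable (segmentMean H a) :=
  (hH.comp (by fun_prop : Measurable fun q : E × ℝ => q.1 + q.2 • a)).lintegral_prod_right'

variable {μ : Measure E} [μ.IsAddRightInvariant] [SFinite μ]

theorem lintegral_segmentMean_rpow_le {H : E → ℝ≥0∞} (hH : Measurable H) (a : E) {r : ℝ}
    (hr : 1 ≤ r) : ∫⁻ y, segmentMean H a y ^ r ∂μ ≤ ∫⁻ z, H z ^ r ∂μ := by
  have hmeas : Measurable fun q : E × ℝ => H (q.1 + q.2 • a) := hH.comp (by fun_prop)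
  have hJensen : ∀ y, segmentMean H a y ^ r ≤ ∫⁻ t in Set.Icc (0 : ℝ) 1, H (y + t • a) ^ r :=
    fun y => by
      simpa [segmentMean] using
        ENNReal.lintegral_mul_rpow_le (μ := volume.restrict (Set.Icc (0 : ℝ) 1)) (w := 1)
          aemeasurable_const (hmeas.comp measurable_prodMk_left).aemeasurable hr
  calc ∫⁻ y, segmentMean H a y ^ r ∂μ
      ≤ ∫⁻ y, (∫⁻ t in Set.Icc (0 : ℝ) 1, H (y + t • a) ^ r) ∂μ := lintegral_mono hJensen
    _ = ∫⁻ t in Set.Icc (0 : ℝ) 1, ∫⁻ y, H (y + t • a) ^ r ∂μ :=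
        lintegral_lintegral_swap (hmeas.pow_const r).aemeasurable
    _ = ∫⁻ z, H z ^ r ∂μ := by
        simp_rw [lintegral_add_right_eq_self (μ := μ) (fun z => H z ^ r)]
        simp

theorem ae_segmentMean_le_essSup {H : E → ℝ≥0∞} (hH : Measurable H) (a : E) :
    ∀ᵐ y ∂μ, segmentMean H a y ≤ essSup H μ := by
  have htranslate : ∀ t : ℝ, ∀ᵐ y ∂μ, H (y + t • a) ≤ essSup H μ := fun t =>
    (measurePreserving_add_right μ (t • a)).quasiMeasurePreserving.ae (ae_le_essSup H)
  have hswap : ∀ᵐ y ∂μ, ∀ᵐ t ∂(volume.restrict (Set.Icc (0 : ℝ) 1)),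
      H (y + t • a) ≤ essSup H μ :=
    (Measure.ae_ae_comm (p := fun y t => H (y + t • a) ≤ essSup H μ) <| measurableSet_le
      (hH.comp (by fun_prop : Measurable fun q : E × ℝ => q.1 + q.2 • a)) measurable_const).2
      (.of_forall htranslate)
  filter_upwards [hswap] with y hy
  calc segmentMean H a y ≤ ∫⁻ _ in Set.Icc (0 : ℝ) 1, essSup H μ := lintegral_mono_ae hy
    _ = essSup H μ := by simp

theorem eLpNorm_segmentMean_le {H : E → ℝ≥0∞} (hH : Measurable H) (a : E) {p : ℝ≥0∞}
    (hp : 1 ≤ p) : eLpNorm (segmentMean H a) p μ ≤ eLpNorm H p μ := by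
  rcases eq_or_ne p ∞ with rfl | hp_top
  · simp only [eLpNorm_exponent_top, eLpNormEssSup, enorm_eq_self]
    exact essSup_le_of_ae_le _ (ae_segmentMean_le_essSup hH a)
  have hp0 : p ≠ 0 := (zero_lt_one.trans_le hp).ne'
  have hr : 1 ≤ p.toReal := by simpa using ENNReal.toReal_mono hp_top hp
  simp only [eLpNorm_eq_lintegral_rpow_enorm_toReal hp0 hp_top, enorm_eq_self]
  exact ENNReal.rpow_le_rpow (lintegral_segmentMean_rpow_le hH a hr) (by positivity)

end SegmentMean

theorem enorm_integral_smul_sub_le {E F : Type*} [NormedAddCommGroup E] [NormedSpace ℝ E]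
    [MeasurableSpace E] [BorelSpace E] {μ : Measure E} [μ.IsAddRightInvariant]
    [IsFiniteMeasureOnCompacts μ] [NormedAddCommGroup F] [NormedSpace ℝ F] [CompleteSpace F]
    {ζ : E → ℝ} (hζ0 : ∀ x, 0 ≤ ζ x) (hζc : HasCompactSupport ζ) (hζcont : Continuous ζ)
    {u : E → F} (hu : Differentiable ℝ u) (x a : E) :
    ‖(∫ y, ζ (x + a - y) • u y ∂μ) - ∫ y, ζ (x - y) • u y ∂μ‖ₑ
      ≤ ‖a‖ₑ *
          ∫⁻ y, ENNReal.ofReal (ζ (x - y)) * segmentMean (fun z => ‖fderiv ℝ u z‖ₑ) a y ∂μ := by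
  have hintegrable : ∀ w : E → F, Continuous w → Integrable (fun y => ζ (x - y) • w y) μ :=
    fun w hw => ((hζcont.comp (continuous_sub_left x)).smul hw).integrable_of_hasCompactSupport
      ((hζc.comp_homeomorph (Homeomorph.subLeft x)).smul_right)
  have hshift : (∫ y, ζ (x + a - y) • u y ∂μ) - ∫ y, ζ (x - y) • u y ∂μ
      = ∫ y, ζ (x - y) • (u (y + a) - u y) ∂μ := by
    rw [← integral_add_right_eq_self (fun y => ζ (x + a - y) • u y) a]
    simp_rw [add_sub_add_right_eq_sub, smul_sub]
    exact (integral_sub (hintegrable (u <| · + a) (hu.continuous.comp (continuous_add_const a)))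
      (hintegrable u hu.continuous)).symm
  rw [hshift]
  calc ‖∫ y, ζ (x - y) • (u (y + a) - u y) ∂μ‖ₑ
      ≤ ∫⁻ y, ‖ζ (x - y) • (u (y + a) - u y)‖ₑ ∂μ := enorm_integral_le_lintegral_enorm _
    _ = ∫⁻ y, ENNReal.ofReal (ζ (x - y)) * ‖u (y + a) - u y‖ₑ ∂μ := by
        simp_rw [enorm_smul, Real.enorm_of_nonneg (hζ0 _)]
    _ ≤ ∫⁻ y, ENNReal.ofReal (ζ (x - y))
          * (‖a‖ₑ * segmentMean (fun z => ‖fderiv ℝ u z‖ₑ) a y) ∂μ := by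
        gcongr with y
        exact enorm_sub_le_mul_segmentMean hu y a
    _ = _ := by
        rw [← lintegral_const_mul' _ _ enorm_ne_top]
        simp_rw [mul_left_comm]

section Lattice

variable {d : ℕ}

theorem toR_neg (ξ : Fin d → ℤ) : toR (-ξ) = -toR ξ := by
  funext i
  simp [toR]

theorem enorm_toR_ne_zero {ρ : Fin d → ℤ} (hρ : ρ ≠ 0) : ‖toR ρ‖ₑ ≠ 0 := by
  rw [enorm_ne_zero]
  contrapose! hρ
  funext i
  simpa [toR] using congrFun hρ i

theorem tsum_ofReal_toR_sub_eq_one {ζ : (Fin d → ℝ) → ℝ} (hζ0 : ∀ x, 0 ≤ ζ x)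
    (hpart : ∀ x, ∑' ξ : Fin d → ℤ, ζ (x - toR ξ) = 1) (y : Fin d → ℝ) :
    ∑' ξ : Fin d → ℤ, ENNReal.ofReal (ζ (toR ξ - y)) = 1 := by
  have hsum : Summable fun ξ : Fin d → ℤ => ζ (-y - toR ξ) := by
    by_contra h
    simpa [tsum_eq_zero_of_not_summable h] using hpart (-y)
  have hreflect : ∀ ξ, toR (-ξ) - y = -y - toR ξ := fun ξ => by rw [toR_neg]; abel
  rw [← (Equiv.neg (Fin d → ℤ)).tsum_eq]
  simp only [Equiv.neg_apply, hreflect]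
  rw [← ENNReal.ofReal_tsum_of_nonneg (fun _ => hζ0 _) hsum, hpart, ENNReal.ofReal_one]

theorem eLpNorm_count_integral_smul_sub_le {F : Type*} [NormedAddCommGroup F] [NormedSpace ℝ F]
    [CompleteSpace F] {ζ : (Fin d → ℝ) → ℝ} (hζ0 : ∀ x, 0 ≤ ζ x) (hζc : HasCompactSupport ζ)
    (hζcont : Continuous ζ) (hpart : ∀ x, ∑' ξ : Fin d → ℤ, ζ (x - toR ξ) = 1)
    {u : (Fin d → ℝ) → F} (hu : Differentiable ℝ u) (a : Fin d → ℝ) {p : ℝ≥0∞} (hp : 1 ≤ p) :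
    eLpNorm (fun ξ : Fin d → ℤ => (∫ y, ζ (toR ξ + a - y) • u y) - ∫ y, ζ (toR ξ - y) • u y) p
        Measure.count
      ≤ ‖a‖ₑ * (max 1 (∫⁻ x, ENNReal.ofReal (ζ x)) * eLpNorm (fderiv ℝ u) p volume) := by
  set H : (Fin d → ℝ) → ℝ≥0∞ := fun z => ‖fderiv ℝ u z‖ₑ
  have hH : Measurable H := (measurable_fderiv ℝ u).enorm
  have hw : ∀ ξ : Fin d → ℤ, Measurable fun y => ENNReal.ofReal (ζ (toR ξ - y)) := fun ξ =>
    ENNReal.measurable_ofReal.comp (hζcont.comp (continuous_sub_left _)).measurable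
  calc _ ≤ ‖a‖₊ • eLpNorm (fun ξ : Fin d → ℤ =>
          ∫⁻ y, ENNReal.ofReal (ζ (toR ξ - y)) * segmentMean H a y) p Measure.count :=
        eLpNorm_le_nnreal_smul_eLpNorm_of_ae_le_mul' (.of_forall fun ξ =>
          enorm_integral_smul_sub_le hζ0 hζc hζcont hu (toR ξ) a) p
    _ ≤ ‖a‖₊ • (max 1 (∫⁻ x, ENNReal.ofReal (ζ x)) * eLpNorm (segmentMean H a) p volume) := by
        gcongr
        exact eLpNorm_count_lintegral_mul_le (fun ξ => (hw ξ).aemeasurable)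
          (measurable_segmentMean hH a).aemeasurable
          (fun ξ => (lintegral_sub_left_eq_self (fun x => ENNReal.ofReal (ζ x)) _).le)
          (fun y => (tsum_ofReal_toR_sub_eq_one hζ0 hpart y).le) hp
    _ ≤ ‖a‖₊ • (max 1 (∫⁻ x, ENNReal.ofReal (ζ x)) * eLpNorm H p volume) := by
        gcongr
        exact eLpNorm_segmentMean_le hH a hp
    _ = _ := by
        rw [eLpNorm_enorm]
        rfl

end Lattice

theorem stmt_10_general {d : ℕ} (j : ℕ)
    (ζ : (Fin d → ℝ) → ℝ) (hζ0 : ∀ x, 0 ≤ ζ x) (hζc : HasCompactSupport ζ)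
    (hζcont : Continuous ζ)
    (hpart : ∀ x : Fin d → ℝ, ∑' ξ : Fin d → ℤ, ζ (x - toR ξ) = 1)
    (p : Fin j → ℝ≥0∞) (hp : ∀ i, 1 ≤ p i) (hps : ∑ i, (p i)⁻¹ = 1) :
    ∃ C : ℝ, 0 < C ∧
      ∀ (W : (Fin d → ℤ) → (Fin j → {ρ : Fin d → ℤ // ρ ≠ 0}) →
            ContinuousMultilinearMap ℝ (fun _ : Fin j => (Fin d → ℝ)) ℝ)
        (m : (Fin j → {ρ : Fin d → ℤ // ρ ≠ 0}) → ℝ),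
        (∀ ξ ρ, ‖W ξ ρ‖ * ∏ i, ‖toR (ρ i).1‖ ≤ m ρ) → Summable m →
        ∀ v : Fin j → ((Fin d → ℝ) → (Fin d → ℝ)), (∀ i, Differentiable ℝ (v i)) →
        ∑' (ξ : Fin d → ℤ) (ρ : Fin j → {ρ : Fin d → ℤ // ρ ≠ 0}),
            (‖W ξ ρ (fun i =>
                (∫ y, ζ (toR ξ + toR (ρ i).1 - y) • v i y)
                  - (∫ y, ζ (toR ξ - y) • v i y))‖₊ : ℝ≥0∞)
          ≤ ENNReal.ofReal (C * (∑' ρ, m ρ))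
              * ∏ i, eLpNorm (fun x => fderiv ℝ (v i) x) (p i) volume := by
  set c : ℝ≥0∞ := max 1 (∫⁻ x, ENNReal.ofReal (ζ x))
  have hc_top : c ≠ ∞ :=
    max_ne_top one_ne_top (hζcont.integrable_of_hasCompactSupport hζc).lintegral_lt_top.ne
  have hc_ne_zero : c ≠ 0 := (zero_lt_one.trans_le (le_max_left _ _)).ne'
  refine ⟨c.toReal ^ j, pow_pos (ENNReal.toReal_pos hc_ne_zero hc_top) j, fun W m hWm hm v hv => ?_⟩
  have hW : ∀ ξ ρ, ‖W ξ ρ‖ₑ * ∏ i, ‖toR (ρ i).1‖ₑ ≤ ENNReal.ofReal (m ρ) := fun ξ ρ => by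
    simpa only [ENNReal.ofReal_mul (norm_nonneg _), ofReal_norm,
      ENNReal.ofReal_prod_of_nonneg fun i _ => norm_nonneg _] using
      ENNReal.ofReal_le_ofReal (hWm ξ ρ)
  have hm0 : ∀ ρ, 0 ≤ m ρ := fun ρ =>
    (mul_nonneg (norm_nonneg _) (Finset.prod_nonneg fun i _ => norm_nonneg _)).trans (hWm 0 ρ)
  calc _ = ∑' ρ, ∑' ξ, ‖W ξ ρ (fun i => (∫ y, ζ (toR ξ + toR (ρ i).1 - y) • v i y)
              - ∫ y, ζ (toR ξ - y) • v i y)‖ₑ := ENNReal.tsum_comm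
    _ ≤ ∑' ρ, ENNReal.ofReal (m ρ)
          * ∏ i, (c * eLpNorm (fun x => fderiv ℝ (v i) x) (p i) volume) :=
        ENNReal.tsum_le_tsum fun ρ => ContinuousMultilinearMap.tsum_enorm_le_of_eLpNorm_le (W · ρ)
          (fun i => enorm_toR_ne_zero (ρ i).2) (fun i => enorm_ne_top) (hW · ρ) _ hps
          fun i => eLpNorm_count_integral_smul_sub_le hζ0 hζc hζcont hpart (hv i) _ (hp i)
    _ = _ := by
        rw [ENNReal.tsum_mul_right, ← ENNReal.ofReal_tsum_of_nonneg hm0 hm, Finset.prod_mul_distrib,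
          Finset.prod_const, Finset.card_univ, Fintype.card_fin, ENNReal.ofReal_mul (by positivity),
          ENNReal.ofReal_pow ENNReal.toReal_nonneg, ENNReal.ofReal_toReal hc_top]
        ring

/-- **Summed multilinear bound (Lemma on variation bounds).** Let `W ξ ρ` be `j`-linear
forms (the derivatives `V_ρ(g_ξ)`) with `‖W ξ ρ‖ ∏ᵢ|ρᵢ| ≤ m(ρ)` and `m` summable
(`M^{(j)} = ∑ m < ∞`).  Then for displacements `v i` whose quasi-interpolants are tested
through the finite differences `D_ρ ṽ(ξ)`, and Hölder-conjugate exponents `∑ 1/pᵢ = 1`,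
`∑_ξ ∑_ρ |V_ρ(g_ξ)[D_ρ v(ξ)]| ≤ C M^{(j)} ∏ᵢ ‖∇vᵢ‖_{L^{pᵢ}}`, with `C` independent
of `V` (i.e. of `W`, `m`) and of the `vᵢ`. -/
theorem stmt_10 {d : ℕ} (j : ℕ) (hj : 1 ≤ j)
    (ζ : (Fin d → ℝ) → ℝ) (hζ0 : ∀ x, 0 ≤ ζ x) (hζc : HasCompactSupport ζ)
    (hζcont : Continuous ζ)
    (hpart : ∀ x : Fin d → ℝ, ∑' ξ : Fin d → ℤ, ζ (x - toR ξ) = 1)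
    (p : Fin j → ℝ≥0∞) (hp : ∀ i, 1 ≤ p i) (hps : ∑ i, (p i)⁻¹ = 1) :
    ∃ C : ℝ, 0 < C ∧
      ∀ (W : (Fin d → ℤ) → (Fin j → {ρ : Fin d → ℤ // ρ ≠ 0}) →
            ContinuousMultilinearMap ℝ (fun _ : Fin j => (Fin d → ℝ)) ℝ)
        (m : (Fin j → {ρ : Fin d → ℤ // ρ ≠ 0}) → ℝ),
        (∀ ξ ρ, ‖W ξ ρ‖ * ∏ i, ‖toR (ρ i).1‖ ≤ m ρ) → Summable m →
        ∀ v : Fin j → ((Fin d → ℝ) → (Fin d → ℝ)), (∀ i, Differentiable ℝ (v i)) →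
        ∑' (ξ : Fin d → ℤ) (ρ : Fin j → {ρ : Fin d → ℤ // ρ ≠ 0}),
            (‖W ξ ρ (fun i =>
                (∫ y, ζ (toR ξ + toR (ρ i).1 - y) • v i y)
                  - (∫ y, ζ (toR ξ - y) • v i y))‖₊ : ℝ≥0∞)
          ≤ ENNReal.ofReal (C * (∑' ρ, m ρ))
              * ∏ i, eLpNorm (fun x => fderiv ℝ (v i) x) (p i) volume :=
  stmt_10_general j ζ hζ0 hζc hζcont hpart p hp hps
end

section
/- (Instability example.) Consider the 1D harmonic chain with energy E^a(u) = ∑_{ξ∈ℤ} ( (a₁/2)|u'_ξ|² + (a₂/2)|u'_ξ + u'_{ξ+1}|² ), where u'_ξ = u(ξ) − u(ξ−1). Then by the parallelogram identity, E^a(u) = ∑_{ξ∈ℤ} ( ((a₁+4a₂)/2)|u'_ξ|² − (a₂/2)|u''_ξ|² ) with u''_ξ = u(ξ+1) − 2u(ξ) + u(ξ−1), for all compactly supported u : ℤ → ℝ. Consequently, if a₁ = 2, a₂ = −1/4 then E^a(u) ≥ (1/2)∑_ξ |u'_ξ|², whereas if a₁ = −1, a₂ = 1/2 then for each δ > 0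 there exists a compactly supported u with ∑|u'_ξ|² = 1 and E^a(u) ≤ −1/2 + δ (the operator δ²E^a(0) has −1 in its spectrum), even though a₁ + 4a₂ = 1 > 0 in both cases. -/
/-!
Since `|x + y|² = 4|x|² - |y - x|² + 2(|y|² - |x|²)`, the energy density at `ξ` equals
`(a₁+4a₂)/2 |u'_ξ|² - a₂/2 |u''_ξ|²` plus the difference `g(ξ+1) - g(ξ)` with `g(ξ) = a₂|u'_ξ|²`,
which sums to zero for compactly supported `u`. When `a₂ ≤ 0` the second-difference term is
nonnegative, which gives stability. When `a₂ > 0` it is destabilising: for the alternating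
profile `u'_ξ = (-1)^(ξ+1)` truncated to `[1, 2m]`, the sums `u'_ξ + u'_{ξ+1}` vanish except at the
two ends, so after normalising `∑|u'|² = 1` the energy is `a₁/2 + a₂/(2m)`, which tends to
`a₁/2 = -1/2` for `a₁ = -1`.
-/

/-- The energy of the 1D harmonic chain with first- and second-neighbour
interactions, `E^a(u) = ∑_ξ ( (a₁/2)|u'_ξ|² + (a₂/2)|u'_ξ + u'_{ξ+1}|² )`,
where `u'_ξ = u(ξ) - u(ξ-1)`. -/
noncomputable def chainEnergy (a₁ a₂ : ℝ) (u : ℤ → ℝ) : ℝ :=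
  ∑' ξ : ℤ, (a₁ / 2 * (u ξ - u (ξ - 1)) ^ 2
    + a₂ / 2 * ((u ξ - u (ξ - 1)) + (u (ξ + 1) - u ξ)) ^ 2)

open Function

lemma summable_of_eq_zero_of_neighbours_eq_zero {M E : Type*} [Zero M] [AddCommMonoid E]
    [TopologicalSpace E] {u : ℤ → M} (hu : (support u).Finite) {f : ℤ → E}
    (hf : ∀ ξ, u (ξ - 1) = 0 → u ξ = 0 → u (ξ + 1) = 0 → f ξ = 0) : Summable f := by
  refine summable_of_hasFiniteSupport <|
    ((hu.image (· + 1)).union (hu.union (hu.image (· - 1)))).subset fun ξ hξ => ?_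
  contrapose! hξ
  simp only [Set.mem_union, Set.mem_image, mem_support, not_or, not_exists, not_and,
    not_not] at hξ
  exact notMem_support.mpr <|
    hf ξ (by simpa using hξ.1 (ξ - 1)) hξ.2.1 (by simpa using hξ.2.2 (ξ + 1))

lemma tsum_int_shift_sub_eq_zero {E : Type*} [AddCommGroup E] [TopologicalSpace E]
    [IsTopologicalAddGroup E] [T2Space E] {g : ℤ → E} (hg : Summable g) :
    ∑' ξ, (g (ξ + 1) - g ξ) = 0 := by
  have hg' : Summable fun ξ => g (ξ + 1) := (Equiv.addRight 1).summable_iff.mpr hg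
  rw [hg'.tsum_sub hg, sub_eq_zero]
  exact (Equiv.addRight 1).tsum_eq g

lemma tsum_ite_mem_one {β R : Type*} [AddCommMonoidWithOne R] [TopologicalSpace R]
    (s : Finset β) [DecidablePred (· ∈ s)] :
    ∑' b, (if b ∈ s then (1 : R) else 0) = s.card := by
  rw [tsum_eq_sum (s := s) fun b hb => if_neg hb, Finset.sum_ite_of_true fun _ h => h]
  simp

theorem chainEnergy_eq_tsum_sub_sq_secondDiff (a₁ a₂ : ℝ) {u : ℤ → ℝ} (hu : (support u).Finite) :
    chainEnergy a₁ a₂ u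
      = ∑' ξ : ℤ, ((a₁ + 4 * a₂) / 2 * (u ξ - u (ξ - 1)) ^ 2
          - a₂ / 2 * (u (ξ + 1) - 2 * u ξ + u (ξ - 1)) ^ 2) := by
  set g : ℤ → ℝ := fun ξ => a₂ * (u ξ - u (ξ - 1)) ^ 2
  have parallelogram (ξ : ℤ) :
      a₁ / 2 * (u ξ - u (ξ - 1)) ^ 2 + a₂ / 2 * ((u ξ - u (ξ - 1)) + (u (ξ + 1) - u ξ)) ^ 2
        = ((a₁ + 4 * a₂) / 2 * (u ξ - u (ξ - 1)) ^ 2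
            - a₂ / 2 * (u (ξ + 1) - 2 * u ξ + u (ξ - 1)) ^ 2) + (g (ξ + 1) - g ξ) := by
    simp only [g, add_sub_cancel_right]
    ring
  have hF : Summable fun ξ : ℤ => (a₁ + 4 * a₂) / 2 * (u ξ - u (ξ - 1)) ^ 2
      - a₂ / 2 * (u (ξ + 1) - 2 * u ξ + u (ξ - 1)) ^ 2 :=
    summable_of_eq_zero_of_neighbours_eq_zero hu fun ξ h₁ h₂ h₃ => by simp [h₁, h₂, h₃]
  have hg : Summable g :=
    summable_of_eq_zero_of_neighbours_eq_zero hu fun ξ h₁ h₂ _ => by simp [g, h₁, h₂]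
  have hg' : Summable fun ξ => g (ξ + 1) - g ξ :=
    summable_of_eq_zero_of_neighbours_eq_zero hu fun ξ h₁ h₂ h₃ => by simp [g, h₁, h₂, h₃]
  rw [chainEnergy, tsum_congr parallelogram, hF.tsum_add hg', tsum_int_shift_sub_eq_zero hg,
    add_zero]

theorem mul_tsum_sq_le_chainEnergy {a₁ a₂ : ℝ} (ha₂ : a₂ ≤ 0) {u : ℤ → ℝ}
    (hu : (support u).Finite) :
    (a₁ + 4 * a₂) / 2 * ∑' ξ : ℤ, (u ξ - u (ξ - 1)) ^ 2 ≤ chainEnergy a₁ a₂ u := by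
  rw [chainEnergy_eq_tsum_sub_sq_secondDiff a₁ a₂ hu, ← tsum_mul_left]
  refine Summable.tsum_le_tsum (fun ξ => (le_sub_self_iff _).mpr ?_)
    (summable_of_eq_zero_of_neighbours_eq_zero hu fun ξ h₁ h₂ _ => by simp [h₁, h₂])
    (summable_of_eq_zero_of_neighbours_eq_zero hu fun ξ h₁ h₂ h₃ => by simp [h₁, h₂, h₃])
  exact mul_nonpos_of_nonpos_of_nonneg (by linarith) (sq_nonneg _)

lemma chainEnergy_const_mul (a₁ a₂ c : ℝ) (u : ℤ → ℝ) :
    chainEnergy a₁ a₂ (fun ξ => c * u ξ) = c ^ 2 * chainEnergy a₁ a₂ u := by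
  rw [chainEnergy, chainEnergy, ← tsum_mul_left]
  exact tsum_congr fun ξ => by ring

lemma tsum_const_mul_sub_sq (c : ℝ) (u : ℤ → ℝ) :
    ∑' ξ : ℤ, (c * u ξ - c * u (ξ - 1)) ^ 2 = c ^ 2 * ∑' ξ : ℤ, (u ξ - u (ξ - 1)) ^ 2 := by
  rw [← tsum_mul_left]
  exact tsum_congr fun ξ => by ring

/-- Its increments are `(-1)^(ξ+1)` on `[1, 2m]` and `0` elsewhere; the even length makes them sum
to zero, so the profile itself has compact support. -/
def alternatingBump (m : ℕ) (ξ : ℤ) : ℝ :=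
  if 1 ≤ ξ ∧ ξ ≤ 2 * m ∧ ξ % 2 = 1 then 1 else 0

namespace alternatingBump

lemma support_finite (m : ℕ) : (support (alternatingBump m)).Finite :=
  (Set.finite_Icc 1 (2 * (m : ℤ))).subset fun ξ hξ => by
    by_contra h
    exact hξ (if_neg fun h' => h ⟨h'.1, h'.2.1⟩)

lemma sub_sq (m : ℕ) (ξ : ℤ) :
    (alternatingBump m ξ - alternatingBump m (ξ - 1)) ^ 2
      = if ξ ∈ Finset.Icc 1 (2 * (m : ℤ)) then 1 else 0 := by
  simp only [alternatingBump, Finset.mem_Icc]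
  split_ifs <;> first | omega | norm_num

lemma add_sub_sq {m : ℕ} (hm : 0 < m) (ξ : ℤ) :
    ((alternatingBump m ξ - alternatingBump m (ξ - 1))
        + (alternatingBump m (ξ + 1) - alternatingBump m ξ)) ^ 2
      = if ξ ∈ ({0, 2 * (m : ℤ)} : Finset ℤ) then 1 else 0 := by
  simp only [alternatingBump, Finset.mem_insert, Finset.mem_singleton]
  split_ifs <;> first | omega | norm_num

lemma tsum_sub_sq (m : ℕ) :
    ∑' ξ : ℤ, (alternatingBump m ξ - alternatingBump m (ξ - 1)) ^ 2 = 2 * m := by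
  simp_rw [sub_sq, tsum_ite_mem_one, Int.card_Icc, add_sub_cancel_right]
  exact_mod_cast (by omega : (2 * (m : ℤ)).toNat = 2 * m)

lemma chainEnergy_eq {m : ℕ} (hm : 0 < m) (a₁ a₂ : ℝ) :
    chainEnergy a₁ a₂ (alternatingBump m) = a₁ * m + a₂ := by
  have hu := support_finite m
  rw [chainEnergy, Summable.tsum_add
    (summable_of_eq_zero_of_neighbours_eq_zero hu fun ξ h₁ h₂ _ => by simp [h₁, h₂])
    (summable_of_eq_zero_of_neighbours_eq_zero hu fun ξ h₁ h₂ h₃ => by simp [h₁, h₂, h₃]),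
    tsum_mul_left, tsum_mul_left, tsum_sub_sq]
  simp_rw [add_sub_sq hm, tsum_ite_mem_one]
  rw [Finset.card_pair (by omega)]
  push_cast
  ring

end alternatingBump

theorem exists_tsum_sq_eq_one_chainEnergy_eq (a₁ a₂ : ℝ) {m : ℕ} (hm : 0 < m) :
    ∃ u : ℤ → ℝ, (support u).Finite ∧ ∑' ξ : ℤ, (u ξ - u (ξ - 1)) ^ 2 = 1 ∧
      chainEnergy a₁ a₂ u = a₁ / 2 + a₂ / (2 * m) := by
  set c := √((2 * m : ℝ)⁻¹)
  have hc : c ^ 2 = (2 * m : ℝ)⁻¹ := Real.sq_sqrt (by positivity)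
  refine ⟨fun ξ => c * alternatingBump m ξ,
    (alternatingBump.support_finite m).subset (support_mul_subset_right _ _), ?_, ?_⟩
  · rw [tsum_const_mul_sub_sq, alternatingBump.tsum_sub_sq, hc]
    field_simp
  · rw [chainEnergy_const_mul, alternatingBump.chainEnergy_eq hm, hc]
    field_simp

/-- **Lattice stability versus ellipticity in the 1D harmonic chain.** For compactly
supported `u`, the parallelogram identity gives
`E^a(u) = ∑_ξ ((a₁+4a₂)/2 |u'_ξ|² - (a₂/2)|u''_ξ|²)`.  Consequently, for
`a₁ = 2, a₂ = -1/4`, `E^a(u) ≥ (1/2)∑|u'_ξ|²`; whereas for `a₁ = -1, a₂ = 1/2`,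
for every `δ > 0` there is a compactly supported `u` with `∑|u'_ξ|² = 1` and
`E^a(u) ≤ -1/2 + δ` — even though `a₁ + 4a₂ = 1 > 0` in both cases. -/
theorem stmt_19 :
    (∀ (a₁ a₂ : ℝ) (u : ℤ → ℝ), (Function.support u).Finite →
      chainEnergy a₁ a₂ u
        = ∑' ξ : ℤ, ((a₁ + 4 * a₂) / 2 * (u ξ - u (ξ - 1)) ^ 2
            - a₂ / 2 * (u (ξ + 1) - 2 * u ξ + u (ξ - 1)) ^ 2))
    ∧ (∀ u : ℤ → ℝ, (Function.support u).Finite →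
        (1/2 : ℝ) * ∑' ξ : ℤ, (u ξ - u (ξ - 1)) ^ 2 ≤ chainEnergy 2 (-(1/4)) u)
    ∧ (∀ δ : ℝ, 0 < δ → ∃ u : ℤ → ℝ, (Function.support u).Finite ∧
        (∑' ξ : ℤ, (u ξ - u (ξ - 1)) ^ 2) = 1 ∧
        chainEnergy (-1) (1/2) u ≤ -(1/2) + δ)
    ∧ ((2 : ℝ) + 4 * (-(1/4)) = 1 ∧ (-1 : ℝ) + 4 * (1/2) = 1) := by
  refine ⟨fun a₁ a₂ _ hu => chainEnergy_eq_tsum_sub_sq_secondDiff a₁ a₂ hu,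
    fun u hu => ?_, fun δ hδ => ?_, by norm_num, by norm_num⟩
  · convert mul_tsum_sq_le_chainEnergy (a₁ := 2) (by norm_num : -(1 / 4 : ℝ) ≤ 0) hu using 2
    norm_num
  · obtain ⟨m, hm⟩ := exists_nat_gt δ⁻¹
    have hm₀ : (0 : ℝ) < m := (inv_pos.mpr hδ).trans hm
    obtain ⟨u, hu, hnorm, hE⟩ := exists_tsum_sq_eq_one_chainEnergy_eq (-1) (1 / 2) (m := m)
      (by exact_mod_cast hm₀)
    refine ⟨u, hu, hnorm, ?_⟩
    calc chainEnergy (-1) (1 / 2) u = -(1 / 2) + (m : ℝ)⁻¹ / 4 := by rw [hE]; ring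
      _ ≤ -(1 / 2) + δ := by linarith [inv_lt_of_inv_lt₀ hδ hm, inv_pos.mpr hm₀]
end
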